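/- Let H be a vertex-minimal finite simple graph with θ(H) ≤ 7 and χ'_s(H) > 13 (i.e., every proper vertex-deleted subgraph has strong chromatic index at most 13). Then H has no vertex of degree 1. -/

import Mathlib

open SimpleGraph

variable {V : Type*}

/-- Two edges are at distance at most 2 (they "see" each other): distinct and
some endpoint of one equals or is adjacent to some endpoint of the other. -/
def EdgeSees (G : SimpleGraph V) (e e' : Sym2 V) : Prop :=
  e ≠ e' ∧ ∃ a ∈ e, ∃ b ∈ e', a = b ∨ G.Adj a b

/-- `G` admits a strong `N`-edge-coloring. -/
def HasStrongColoring (G : SimpleGraph V) (N : ℕ) : Prop :=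
  ∃ f : G.edgeSet → Fin N, ∀ e e' : G.edgeSet, EdgeSees G e.val e'.val → f e ≠ f e'

/-- `G − v`: delete the vertex `v` (remove all edges incident to it). -/
def DelV (G : SimpleGraph V) (v : V) : SimpleGraph V where
  Adj a b := G.Adj a b ∧ a ≠ v ∧ b ≠ v
  symm := ⟨fun _ _ h => ⟨h.1.symm, h.2.2, h.2.1⟩⟩
  loopless := ⟨fun a h => G.irrefl h.1⟩

/-! Let `v` be a vertex of degree 1 with neighbour `u`, and `d = deg u`. The edges at distance
at most 2 from `uv` are incident to `u` or to a neighbour `w ≠ v` of `u`; since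
`deg w ≤ 7 - d`, there are at most `d + (d - 1)(7 - d) - 1 ≤ 12` of them besides `uv`.
Hence a strong 13-colouring of `H − v` leaves a colour free for `uv`, and extends to `H`. -/

section EdgeSees

variable {G : SimpleGraph V}

theorem EdgeSees.symm {e e' : Sym2 V} (h : EdgeSees G e e') : EdgeSees G e' e := by
  obtain ⟨hne, a, ha, b, hb, hab⟩ := h
  exact ⟨hne.symm, b, hb, a, ha, hab.imp Eq.symm fun h => h.symm⟩

theorem mem_edgeSet_delV {v : V} {e : Sym2 V} :
    e ∈ (DelV G v).edgeSet ↔ e ∈ G.edgeSet ∧ v ∉ e := by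
  induction e with
  | _ a b =>
    simp only [mem_edgeSet, DelV, Sym2.mem_iff, not_or]
    exact and_congr_right fun _ => ⟨fun ⟨ha, hb⟩ => ⟨ha.symm, hb.symm⟩,
      fun ⟨ha, hb⟩ => ⟨Ne.symm ha, Ne.symm hb⟩⟩

theorem EdgeSees.delV {v : V} {e e' : Sym2 V} (h : EdgeSees G e e') (he : v ∉ e)
    (he' : v ∉ e') : EdgeSees (DelV G v) e e' := by
  obtain ⟨hne, a, ha, b, hb, hab⟩ := h
  exact ⟨hne, a, ha, b, hb,
    hab.imp id fun hab => ⟨hab, fun h => he (h ▸ ha), fun h => he' (h ▸ hb)⟩⟩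

end EdgeSees

section Pendant

variable {G : SimpleGraph V} {u v : V}

theorem eq_of_mem_of_forall_adj_eq (hv : ∀ w, G.Adj v w → w = u) {e : Sym2 V}
    (he : e ∈ G.edgeSet) (hve : v ∈ e) : e = s(u, v) := by
  induction e with
  | _ a b =>
    rw [mem_edgeSet] at he
    rcases Sym2.mem_iff.mp hve with rfl | rfl
    · rw [hv b he, Sym2.eq_swap]
    · rw [hv a he.symm]

theorem HasStrongColoring.of_delV_of_forall_adj_eq {N : ℕ} (hv : ∀ w, G.Adj v w → w = u)
    (T : Finset (Sym2 V)) (hT : ∀ e ∈ G.edgeSet, EdgeSees G s(u, v) e → e ∈ T)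
    (hTN : T.card < N) (hcol : HasStrongColoring (DelV G v) N) : HasStrongColoring G N := by
  classical
  obtain ⟨f, hf⟩ := hcol
  obtain ⟨c, hc⟩ : ∃ c : Fin N,
      ∀ e : (DelV G v).edgeSet, EdgeSees G s(u, v) e.val → f e ≠ c := by
    by_contra! hall
    choose g hg hgc using hall
    have hinj : Set.InjOn (fun c => (g c).val) (Finset.univ : Finset (Fin N)) :=
      fun c _ c' _ h => by rw [← hgc c, ← hgc c', Subtype.ext h]
    have hmaps : ∀ c ∈ (Finset.univ : Finset (Fin N)), (g c).val ∈ T :=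
      fun c _ => hT _ (mem_edgeSet_delV.mp (g c).2).1 (hg c)
    simpa using (Finset.card_le_card_of_injOn _ hmaps hinj).trans_lt hTN
  refine ⟨fun e => if h : e.val ∈ (DelV G v).edgeSet then f ⟨e.val, h⟩ else c, ?_⟩
  have huv : ∀ e : G.edgeSet, e.val ∉ (DelV G v).edgeSet → e.val = s(u, v) := fun e h =>
    eq_of_mem_of_forall_adj_eq hv e.2 (not_not.mp fun hve => h (mem_edgeSet_delV.mpr ⟨e.2, hve⟩))
  intro e e' hsee
  by_cases he : e.val ∈ (DelV G v).edgeSet <;> by_cases he' : e'.val ∈ (DelV G v).edgeSet <;>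
    simp only [he, he', dif_pos, dif_neg, not_false_eq_true]
  · exact hf ⟨_, he⟩ ⟨_, he'⟩
      (hsee.delV (mem_edgeSet_delV.mp he).2 (mem_edgeSet_delV.mp he').2)
  · exact hc ⟨_, he⟩ (huv e' he' ▸ hsee.symm)
  · exact (hc ⟨_, he'⟩ (huv e he ▸ hsee)).symm
  · exact absurd ((huv e he).trans (huv e' he').symm) hsee.1

variable [Fintype V] [DecidableRel G.Adj] [DecidableEq V]

theorem exists_mem_incidenceFinset_of_edgeSees (hv : ∀ w, G.Adj v w → w = u) {e : Sym2 V}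
    (he : e ∈ G.edgeSet) (hsee : EdgeSees G s(u, v) e) :
    ∃ w ∈ insert u ((G.neighborFinset u).erase v), e ∈ G.incidenceFinset w := by
  obtain ⟨hne, a, ha, b, hb, hab⟩ := hsee
  have hve : v ∉ e := fun hve => hne (eq_of_mem_of_forall_adj_eq hv he hve).symm
  have hbv : b ≠ v := fun h => hve (h ▸ hb)
  have hinc : e ∈ G.incidenceFinset b := (G.mem_incidenceFinset b e).mpr ⟨he, hb⟩
  rcases Sym2.mem_iff.mp ha with rfl | rfl
  · rcases hab with rfl | hab
    · exact ⟨a, Finset.mem_insert_self _ _, hinc⟩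
    · exact ⟨b, Finset.mem_insert_of_mem
        (Finset.mem_erase.mpr ⟨hbv, (G.mem_neighborFinset a b).mpr hab⟩), hinc⟩
  · rcases hab with rfl | hab
    · exact absurd rfl hbv
    · exact ⟨b, hv b hab ▸ Finset.mem_insert_self _ _, hinc⟩

theorem sum_degree_insert_erase_neighborFinset_le {k : ℕ}
    (hore : ∀ a b, G.Adj a b → G.degree a + G.degree b ≤ k) (huv : G.Adj u v) :
    ∑ w ∈ insert u ((G.neighborFinset u).erase v), G.degree w ≤
      G.degree u + (G.degree u - 1) * (k - G.degree u) := by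
  rw [Finset.sum_insert (by simp)]
  gcongr
  calc ∑ w ∈ (G.neighborFinset u).erase v, G.degree w
      ≤ ((G.neighborFinset u).erase v).card * (k - G.degree u) :=
        Finset.sum_le_card_nsmul _ _ _ fun w hw => by
          have := hore u w ((G.mem_neighborFinset u w).mp (Finset.mem_of_mem_erase hw))
          omega
    _ = (G.degree u - 1) * (k - G.degree u) := by
        rw [Finset.card_erase_of_mem ((G.mem_neighborFinset u v).mpr huv),
          card_neighborFinset_eq_degree]

end Pendant

/-- A minimal counterexample with θ ≤ 7, χ'ₛ > 13 has no 1-vertex. -/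
theorem stmt4 [Fintype V] (H : SimpleGraph V) [DecidableRel H.Adj]
    (hore : ∀ u w, H.Adj u w → H.degree u + H.degree w ≤ 7)
    (hnc : ¬ HasStrongColoring H 13)
    (hmin : ∀ v, HasStrongColoring (DelV H v) 13) :
    ∀ v, H.degree v ≠ 1 := by
  intro v hv
  classical
  obtain ⟨u, hu⟩ := Finset.card_eq_one.mp hv
  have hvu : H.Adj v u := by simp [← mem_neighborFinset, hu]
  have honly : ∀ w, H.Adj v w → w = u := fun w hw => by
    simpa [hu] using (H.mem_neighborFinset v w).mpr hw
  set B := (insert u ((H.neighborFinset u).erase v)).biUnion fun w => H.incidenceFinset w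
  have hdeg : H.degree u ≤ 6 := by have := hore v u hvu; omega
  have hB : B.card ≤ 13 := calc
    B.card ≤ ∑ w ∈ insert u ((H.neighborFinset u).erase v), H.degree w := by
      simpa only [card_incidenceFinset_eq_degree] using
        Finset.card_biUnion_le (t := fun w => H.incidenceFinset w)
    _ ≤ H.degree u + (H.degree u - 1) * (7 - H.degree u) :=
      sum_degree_insert_erase_neighborFinset_le hore hvu.symm
    _ ≤ 13 := by interval_cases H.degree u <;> omega
  have huvB : s(u, v) ∈ B := Finset.mem_biUnion.mpr
    ⟨u, Finset.mem_insert_self _ _, (H.mem_incidenceFinset u _).mpr ⟨hvu.symm, Sym2.mem_mk_left u v⟩⟩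
  refine hnc (HasStrongColoring.of_delV_of_forall_adj_eq honly (B.erase s(u, v))
    (fun e he hsee => Finset.mem_erase.mpr ⟨hsee.1.symm, Finset.mem_biUnion.mpr
      (exists_mem_incidenceFinset_of_edgeSees honly he hsee)⟩)
    ((Finset.card_erase_lt_of_mem huvB).trans_le hB) (hmin v))
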